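/- Let g, g* be regular Hom-Lie algebras (g,[·,·]_g,φ) and (g*,[·,·]_{g*},(φ⁻¹)*). The compatibility condition Δ([x,y]_g) = ad_{φ⁻¹(x)} Δ(y) − ad_{φ⁻¹(y)} Δ(x) for all x,y ∈ g (where Δ : g → ∧²g is the dual of the bracket of g*) holds if and only if the condition Υ([ξ,η]_{g*}) = ad^{g*}_{φ*(ξ)} Υ(η) − ad^{g*}_{φ*(η)} Υ(ξ) for all ξ,η ∈ g* holds, where Υ : g* → ∧²g* is the dual of the bracket of g. -/

import Mathlib

open LinearMap Module

/-- A (regular, i.e. multiplicative with invertible structure map) Hom-Lie algebra. -/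
structure HomLieAlgebra (K g : Type*) [Field K] [AddCommGroup g] [Module K g] where
  bracket : g →ₗ[K] g →ₗ[K] g
  phi : g ≃ₗ[K] g
  skew : ∀ x y, bracket x y = - bracket y x
  phi_bracket : ∀ x y, phi (bracket x y) = bracket (phi x) (phi y)
  jacobi : ∀ x y z,
    bracket (phi x) (bracket y z) + bracket (phi y) (bracket z x)
      + bracket (phi z) (bracket x y) = 0

variable {K g V : Type*} [Field K] [AddCommGroup g] [Module K g]
  [AddCommGroup V] [Module K V]

/-- `ρ` is a representation of the Hom-Lie algebra `L` on `V` with respect to `β`. -/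
def HomLieAlgebra.IsRep (L : HomLieAlgebra K g) (β : V ≃ₗ[K] V)
    (ρ : g →ₗ[K] V →ₗ[K] V) : Prop :=
  (∀ x u, ρ (L.phi x) (β u) = β (ρ x u)) ∧
  (∀ x y u, ρ (L.bracket x y) (β u) = ρ (L.phi x) (ρ y u) - ρ (L.phi y) (ρ x u))

variable [FiniteDimensional K g]

/-- The adjoint action of `x ∈ g` on `∧²g`, where elements of `∧²g` are encoded as
skew-symmetric bilinear forms `W` on `g*` (via `⟨y∧z, ξ∧η⟩ = ξ(y)η(z) − η(y)ξ(z)`):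
`[x, y∧z] = [x,y]∧φ(z) + φ(y)∧[x,z]`. -/
def adExt (L : HomLieAlgebra K g) (x : g) (W : Dual K g → Dual K g → K)
    (ξ η : Dual K g) : K :=
  W (ξ ∘ₗ L.bracket x) (η ∘ₗ L.phi.toLinearMap)
    + W (ξ ∘ₗ L.phi.toLinearMap) (η ∘ₗ L.bracket x)

/-- `Δ : g → ∧²g`, the dual of the bracket of `g*`: `⟨Δ(x), ξ∧η⟩ = ⟨x, [ξ,η]⟩`. -/
def Delta (Lst : HomLieAlgebra K (Dual K g)) (x : g) (ξ η : Dual K g) : K :=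
  Lst.bracket ξ η x

/-- `Υ : g* → ∧²g*`, the dual of the bracket of `g`, as a bilinear form on `g`. -/
def Upsilon (L : HomLieAlgebra K g) (ξ : Dual K g) (x y : g) : K :=
  ξ (L.bracket x y)

/-- The transpose of `ad_ξ : g* → g*` acting on `g ≅ g**`. -/
noncomputable def coadT (Lst : HomLieAlgebra K (Dual K g)) (ξ : Dual K g) (x : g) : g :=
  (evalEquiv K g).symm ((Lst.bracket ξ).dualMap (evalEquiv K g x))

/-- The transpose of the structure map of `g*` acting on `g ≅ g**`. -/
noncomputable def phiT (Lst : HomLieAlgebra K (Dual K g)) (x : g) : g :=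
  (evalEquiv K g).symm (Lst.phi.toLinearMap.dualMap (evalEquiv K g x))

/-- The adjoint action of `ξ ∈ g*` on `∧²g*`, encoded as a bilinear form on `g`:
`[ξ, α∧β] = [ξ,α]∧ψ(β) + ψ(α)∧[ξ,β]` with `ψ` the structure map of `g*`. -/
noncomputable def adExtStar (Lst : HomLieAlgebra K (Dual K g)) (ξ : Dual K g)
    (W : g → g → K) (x y : g) : K :=
  W (coadT Lst ξ x) (phiT Lst y) + W (phiT Lst x) (coadT Lst ξ y)

/-! Evaluated at `x, y ∈ g` and `ξ, η ∈ g*`, both compatibility conditions are the same scalar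
identity. Since the structure map of `g*` is `(φ⁻¹)*`, its transpose on `g` is `φ⁻¹`, and each
side expands into four values of `[·,·]_{g*}` at `x` or `y`; the two expansions agree after one
use of the skew-symmetry of `[·,·]_{g*}`. -/

theorem apply_coadT (Lst : HomLieAlgebra K (Dual K g)) (ζ α : Dual K g) (x : g) :
    α (coadT Lst ζ x) = Lst.bracket ζ α x := by
  simp [coadT]

theorem phiT_eq_phi_symm (L : HomLieAlgebra K g) (Lst : HomLieAlgebra K (Dual K g))
    (hphi : ∀ (ξ : Dual K g) (x : g), Lst.phi ξ x = ξ (L.phi.symm x)) (x : g) :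
    phiT Lst x = L.phi.symm x :=
  (evalEquiv K g).injective <| LinearMap.ext fun α => by simpa [phiT] using hphi α x

theorem adExtStar_upsilon (L : HomLieAlgebra K g) (Lst : HomLieAlgebra K (Dual K g))
    (hphi : ∀ (ξ : Dual K g) (x : g), Lst.phi ξ x = ξ (L.phi.symm x))
    (ζ η : Dual K g) (x y : g) :
    adExtStar Lst ζ (Upsilon L η) x y
      = Lst.bracket ζ (η ∘ₗ L.bracket (L.phi.symm x)) y
        - Lst.bracket ζ (η ∘ₗ L.bracket (L.phi.symm y)) x := by
  have hswap : η (L.bracket (coadT Lst ζ x) (L.phi.symm y))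
      = -(η ∘ₗ L.bracket (L.phi.symm y)) (coadT Lst ζ x) := by
    simp [L.skew (coadT Lst ζ x)]
  rw [adExtStar, Upsilon, Upsilon, phiT_eq_phi_symm L Lst hphi, phiT_eq_phi_symm L Lst hphi,
    hswap, ← LinearMap.comp_apply, apply_coadT, apply_coadT]
  ring

theorem HomLieAlgebra.bracket_apply_swap {W : Type*} [AddCommGroup W] [Module K W]
    (L : HomLieAlgebra K (Dual K W)) (α β : Dual K W) (w : W) :
    L.bracket α β w = -L.bracket β α w := by
  rw [L.skew]
  rfl

theorem adExt_delta_sub_eq_adExtStar_upsilon_sub (L : HomLieAlgebra K g)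
    (Lst : HomLieAlgebra K (Dual K g))
    (hphi : ∀ (ξ : Dual K g) (x : g), Lst.phi ξ x = ξ (L.phi.symm x))
    (x y : g) (ξ η : Dual K g) :
    adExt L (L.phi.symm x) (Delta Lst y) ξ η - adExt L (L.phi.symm y) (Delta Lst x) ξ η
      = adExtStar Lst (ξ ∘ₗ L.phi.toLinearMap) (Upsilon L η) x y
        - adExtStar Lst (η ∘ₗ L.phi.toLinearMap) (Upsilon L ξ) x y := by
  simp only [adExt, Delta]
  rw [adExtStar_upsilon L Lst hphi, adExtStar_upsilon L Lst hphi,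
    Lst.bracket_apply_swap (η ∘ₗ L.phi.toLinearMap) _ x,
    Lst.bracket_apply_swap (η ∘ₗ L.phi.toLinearMap) _ y]
  ring

/-- given Hom-Lie algebras `(g,[·,·],φ)` and `(g*,[·,·]_{g*},(φ⁻¹)*)`,
the compatibility condition `Δ([x,y]) = ad_{φ⁻¹(x)}Δ(y) − ad_{φ⁻¹(y)}Δ(x)` holds
if and only if `Υ([ξ,η]_{g*}) = ad_{φ*(ξ)}Υ(η) − ad_{φ*(η)}Υ(ξ)` holds. -/
theorem compat_iff_dual_compat (L : HomLieAlgebra K g)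
    (Lst : HomLieAlgebra K (Dual K g))
    (hphi : ∀ (ξ : Dual K g) (x : g), Lst.phi ξ x = ξ (L.phi.symm x)) :
    (∀ (x y : g) (ξ η : Dual K g),
      Lst.bracket ξ η (L.bracket x y)
        = adExt L (L.phi.symm x) (Delta Lst y) ξ η
          - adExt L (L.phi.symm y) (Delta Lst x) ξ η) ↔
    (∀ (ξ η : Dual K g) (x y : g),
      Upsilon L (Lst.bracket ξ η) x y
        = adExtStar Lst (ξ ∘ₗ L.phi.toLinearMap) (Upsilon L η) x y
          - adExtStar Lst (η ∘ₗ L.phi.toLinearMap) (Upsilon L ξ) x y) := by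
  constructor
  · intro h ξ η x y
    rw [Upsilon, ← adExt_delta_sub_eq_adExtStar_upsilon_sub L Lst hphi]
    exact h x y ξ η
  · intro h x y ξ η
    rw [adExt_delta_sub_eq_adExtStar_upsilon_sub L Lst hphi]
    exact h ξ η x y
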